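/- arXiv:1509.02493 — 2 statements merged into one kernel-verified Lean document; each statement's English description precedes it below -/
import Mathlib

section
/- Let ⟨X, Y⟩ be a norming Banach dual pair, E and G Banach function spaces, T : E → G a linear operator dominated by a positive bounded operator R : E → G, and suppose T_Y : E(Y) → G(Y) is a map satisfying ⟨x, T_Y e⟩ = T⟨x, e⟩ for all e ∈ E(Y), x ∈ X. Then T_Y is a bounded linear operator with ‖T_Y‖ ≤ ‖R‖. -/
open MeasureTheory

/-- A (model of a) Banach function space on a measure space: a Banach lattice `E`
together with an injective lattice-respecting linear embedding `ι` into `L⁰(μ)`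
whose range is an order ideal. -/
structure IsBanachFunctionSpace {α : Type*} [MeasurableSpace α] (μ : Measure α)
    (E : Type*) [NormedAddCommGroup E] [Lattice E] [HasSolidNorm E] [IsOrderedAddMonoid E] [NormedSpace ℝ E] [CompleteSpace E]
    (ι : E →ₗ[ℝ] (α →ₘ[μ] ℝ)) : Prop where
  inj : Function.Injective ι
  map_abs : ∀ e : E, ⇑(ι |e|) =ᵐ[μ] fun a => |(ι e) a|
  ideal : ∀ (f : α →ₘ[μ] ℝ) (e : E), (∀ᵐ a ∂μ, |f a| ≤ |(ι e) a|) → ∃ e' : E, ι e' = f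

/-- `f` is a member of the Köthe–Bochner space `E(Y)`, with `e ∈ E` representing its
pointwise norm function `a ↦ ‖f a‖`. -/
def MemKB {α E : Type*} [MeasurableSpace α] {μ : Measure α}
    [NormedAddCommGroup E] [Lattice E] [HasSolidNorm E] [IsOrderedAddMonoid E] [NormedSpace ℝ E]
    {Y : Type*} [NormedAddCommGroup Y]
    (ι : E →ₗ[ℝ] (α →ₘ[μ] ℝ)) (f : α → Y) (e : E) : Prop :=
  AEStronglyMeasurable f μ ∧ (fun a => ‖f a‖) =ᵐ[μ] ⇑(ι e)

/-- A norming Banach dual pairing between `X` and `Y`: a bounded bilinear form such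
that the norms of `X` and of `Y` are recovered by pairing against the closed unit
ball of the other space. -/
def IsNormingDualPair {X Y : Type*} [NormedAddCommGroup X] [NormedSpace ℝ X]
    [NormedAddCommGroup Y] [NormedSpace ℝ Y] (B : X →L[ℝ] Y →L[ℝ] ℝ) : Prop :=
  (∀ x : X, ‖x‖ = ⨆ y : {y : Y // ‖y‖ ≤ 1}, |B x y|) ∧
  (∀ y : Y, ‖y‖ = ⨆ x : {x : X // ‖x‖ ≤ 1}, |B x y|)

/-!
Functions in `G(Y)` are almost everywhere separably valued, so a countable part of the unit ball
of `X` norms all their values at once. Hence an element of `G(Y)` is determined almost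
everywhere by its scalar pairings `⟨x, ·⟩`, and its pointwise norm is the supremum of
`|⟨x, ·⟩|` over that countable family. Since `⟨x, T_Y f⟩ = T⟨x, f⟩`, linearity of `T_Y` follows
from that of `T`, and domination gives `|⟨x, T_Y f⟩| ≤ R|⟨x, f⟩| ≤ R‖f(·)‖`, so that
`‖T_Y f(·)‖ ≤ R‖f(·)‖` and `‖T_Y f‖ ≤ ‖R‖ ‖f‖`.
-/

namespace IsBanachFunctionSpace

variable {α E : Type*} [MeasurableSpace α] {μ : Measure α}
  [NormedAddCommGroup E] [Lattice E] [HasSolidNorm E] [IsOrderedAddMonoid E] [NormedSpace ℝ E]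
  [CompleteSpace E] {ι : E →ₗ[ℝ] (α →ₘ[μ] ℝ)}

theorem nonneg_iff_ae_nonneg (hE : IsBanachFunctionSpace μ E ι) {u : E} :
    0 ≤ u ↔ ∀ᵐ a ∂μ, 0 ≤ ι u a := by
  constructor
  · intro hu
    filter_upwards [hE.map_abs u] with a ha
    rw [← abs_of_nonneg hu, ha]
    exact abs_nonneg _
  · intro hu
    have habs : ι |u| = ι u :=
      AEEqFun.ext <| by filter_upwards [hE.map_abs u, hu] with a ha hua; rw [ha, abs_of_nonneg hua]
    exact hE.inj habs ▸ abs_nonneg u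

theorem le_iff_ae_le (hE : IsBanachFunctionSpace μ E ι) {u v : E} :
    u ≤ v ↔ ∀ᵐ a ∂μ, ι u a ≤ ι v a := by
  rw [← sub_nonneg, hE.nonneg_iff_ae_nonneg, map_sub]
  refine Filter.eventually_congr ?_
  filter_upwards [AEEqFun.coeFn_sub (ι v) (ι u)] with a ha
  rw [ha, Pi.sub_apply, sub_nonneg]

theorem abs_le_abs_of_ae (hE : IsBanachFunctionSpace μ E ι) {u v : E}
    (h : ∀ᵐ a ∂μ, |ι u a| ≤ |ι v a|) : |u| ≤ |v| := by
  rw [hE.le_iff_ae_le]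
  filter_upwards [h, hE.map_abs u, hE.map_abs v] with a ha hu hv
  rwa [hu, hv]

theorem exists_ae_eq_of_ae_abs_le (hE : IsBanachFunctionSpace μ E ι) {φ : α → ℝ}
    (hφ : AEStronglyMeasurable φ μ) {e : E} (h : ∀ᵐ a ∂μ, |φ a| ≤ |ι e a|) :
    ∃ e' : E, φ =ᵐ[μ] ι e' := by
  obtain ⟨e', he'⟩ := hE.ideal (AEEqFun.mk φ hφ) e <| by
    filter_upwards [AEEqFun.coeFn_mk φ hφ, h] with a ha hφa
    rwa [ha]
  exact ⟨e', he' ▸ (AEEqFun.coeFn_mk φ hφ).symm⟩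

end IsBanachFunctionSpace

theorem LinearMap.coeFn_apply_add_smul_ae {α M : Type*} [MeasurableSpace α] {μ : Measure α}
    [AddCommGroup M] [Module ℝ M] (L : M →ₗ[ℝ] (α →ₘ[μ] ℝ)) (c₁ c₂ : ℝ) (u v : M) :
    ⇑(L (c₁ • u + c₂ • v)) =ᵐ[μ] fun a => c₁ * L u a + c₂ * L v a := by
  rw [map_add, map_smul, map_smul]
  filter_upwards [AEEqFun.coeFn_add (c₁ • L u) (c₂ • L v), AEEqFun.coeFn_smul c₁ (L u),
    AEEqFun.coeFn_smul c₂ (L v)] with a hadd h₁ h₂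
  simp only [hadd, Pi.add_apply, h₁, h₂, Pi.smul_apply, smul_eq_mul]

namespace MemKB

variable {α E Y : Type*} [MeasurableSpace α] {μ : Measure α}
  [NormedAddCommGroup E] [Lattice E] [HasSolidNorm E] [IsOrderedAddMonoid E] [NormedSpace ℝ E]
  [NormedAddCommGroup Y] {ι : E →ₗ[ℝ] (α →ₘ[μ] ℝ)} {f g : α → Y} {e e' : E}

theorem smul [NormedSpace ℝ Y] (hf : MemKB ι f e) (c : ℝ) : MemKB ι (c • f) (|c| • e) := by
  refine ⟨hf.1.const_smul c, ?_⟩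
  rw [map_smul]
  filter_upwards [hf.2, AEEqFun.coeFn_smul |c| (ι e)] with a hfa hca
  simp only [Pi.smul_apply, norm_smul, Real.norm_eq_abs, hca, hfa, smul_eq_mul]

variable [CompleteSpace E]

theorem exists_add (hE : IsBanachFunctionSpace μ E ι) (hf : MemKB ι f e) (hg : MemKB ι g e') :
    ∃ e'' : E, MemKB ι (f + g) e'' := by
  have hm : AEStronglyMeasurable (f + g) μ := hf.1.add hg.1
  obtain ⟨e'', he''⟩ := hE.exists_ae_eq_of_ae_abs_le hm.norm (e := e + e') <| by
    filter_upwards [hf.2, hg.2, AEEqFun.coeFn_add (ι e) (ι e')] with a hfa hga hadd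
    simp only [map_add, hadd, Pi.add_apply, ← hfa, ← hga, abs_norm]
    exact (norm_add_le _ _).trans (le_abs_self _)
  exact ⟨e'', hm, he''⟩

theorem exists_comp_ae_eq [NormedSpace ℝ Y] (hE : IsBanachFunctionSpace μ E ι)
    (hf : MemKB ι f e) (φ : Y →L[ℝ] ℝ) : ∃ e' : E, (fun a => φ (f a)) =ᵐ[μ] ι e' := by
  refine hE.exists_ae_eq_of_ae_abs_le (φ.continuous.comp_aestronglyMeasurable hf.1)
    (e := ‖φ‖ • e) ?_
  filter_upwards [hf.2, AEEqFun.coeFn_smul ‖φ‖ (ι e)] with a hfa hsmul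
  rw [map_smul, hsmul, Pi.smul_apply, smul_eq_mul, ← hfa, ← Real.norm_eq_abs]
  exact (φ.le_opNorm (f a)).trans (le_abs_self _)

end MemKB

section NormingPair

variable {X Y : Type*} [NormedAddCommGroup X] [NormedSpace ℝ X]
  [NormedAddCommGroup Y] [NormedSpace ℝ Y]

theorem abs_apply_apply_le_of_norm_le_one (B : X →L[ℝ] Y →L[ℝ] ℝ) {x : X} (hx : ‖x‖ ≤ 1)
    (y : Y) : |B x y| ≤ ‖B‖ * ‖y‖ := by
  rw [← Real.norm_eq_abs]
  calc ‖B x y‖ ≤ ‖B‖ * ‖x‖ * ‖y‖ := B.le_opNorm₂ x y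
    _ ≤ ‖B‖ * 1 * ‖y‖ := by gcongr
    _ = ‖B‖ * ‖y‖ := by rw [mul_one]

theorem bddAbove_range_abs_apply_apply (B : X →L[ℝ] Y →L[ℝ] ℝ) (y : Y) :
    BddAbove (Set.range fun x : {x : X // ‖x‖ ≤ 1} => |B x y|) :=
  ⟨‖B‖ * ‖y‖, by rintro _ ⟨x, rfl⟩; exact abs_apply_apply_le_of_norm_le_one B x.2 y⟩

theorem abs_apply_apply_le_norm {B : X →L[ℝ] Y →L[ℝ] ℝ}
    (hB : ∀ y : Y, ‖y‖ = ⨆ x : {x : X // ‖x‖ ≤ 1}, |B x y|) {x : X} (hx : ‖x‖ ≤ 1) (y : Y) :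
    |B x y| ≤ ‖y‖ :=
  hB y ▸ le_ciSup (bddAbove_range_abs_apply_apply B y) ⟨x, hx⟩

theorem exists_lt_abs_apply_apply {B : X →L[ℝ] Y →L[ℝ] ℝ}
    (hB : ∀ y : Y, ‖y‖ = ⨆ x : {x : X // ‖x‖ ≤ 1}, |B x y|) (y : Y) {r : ℝ} (hr : r < ‖y‖) :
    ∃ x : X, ‖x‖ ≤ 1 ∧ r < |B x y| := by
  have : Nonempty {x : X // ‖x‖ ≤ 1} := ⟨⟨0, by simp⟩⟩
  obtain ⟨x, hx⟩ := (lt_ciSup_iff (bddAbove_range_abs_apply_apply B y)).mp (hB y ▸ hr)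
  exact ⟨x, x.2, hx⟩

theorem TopologicalSpace.IsSeparable.exists_countable_norming {B : X →L[ℝ] Y →L[ℝ] ℝ}
    (hB : ∀ y : Y, ‖y‖ = ⨆ x : {x : X // ‖x‖ ≤ 1}, |B x y|) {t : Set Y}
    (ht : TopologicalSpace.IsSeparable t) :
    ∃ S : Set X, S.Countable ∧ (∀ x ∈ S, ‖x‖ ≤ 1) ∧
      ∀ y ∈ t, ∀ C : ℝ, (∀ x ∈ S, |B x y| ≤ C) → ‖y‖ ≤ C := by
  obtain ⟨D, hD, htD⟩ := ht
  have : Countable D := hD.to_subtype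
  choose x hx1 hx using fun (d : D) (n : ℕ) =>
    exists_lt_abs_apply_apply hB d (r := ‖(d : Y)‖ - 1 / (n + 1)) (by
      have : (0 : ℝ) < 1 / (n + 1) := by positivity
      linarith)
  refine ⟨Set.range fun p : D × ℕ => x p.1 p.2, Set.countable_range _, ?_, ?_⟩
  · rintro _ ⟨p, rfl⟩
    exact hx1 _ _
  intro y hy C hC
  refine le_of_forall_pos_le_add fun δ hδ => ?_
  -- `‖y‖ ≤ ‖d‖ + ε < |B x₀ d| + 2ε ≤ |B x₀ y| + (‖B‖ + 2)ε` for `d ∈ D` near `y`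
  set ε := δ / (‖B‖ + 2)
  have hε : 0 < ε := by positivity
  have hδε : ‖B‖ * ε + 2 * ε = δ := by
    simp only [ε]
    field_simp
  obtain ⟨d, hdD, hyd⟩ := Metric.mem_closure_iff.mp (htD hy) ε hε
  obtain ⟨n, hn⟩ := exists_nat_one_div_lt hε
  set x₀ := x ⟨d, hdD⟩ n
  have hx₀d : ‖d‖ - ε < |B x₀ d| := (hx ⟨d, hdD⟩ n).trans_le' (by simp only; linarith)
  have hx₀y : |B x₀ y| ≤ C := hC _ ⟨(⟨d, hdD⟩, n), rfl⟩
  have hdy : |B x₀ d| ≤ |B x₀ y| + ‖B‖ * ε := by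
    calc |B x₀ d| = |B x₀ y + B x₀ (d - y)| := by rw [map_sub, add_sub_cancel]
      _ ≤ |B x₀ y| + ‖B‖ * ‖d - y‖ := (abs_add_le _ _).trans <|
        add_le_add_right (abs_apply_apply_le_of_norm_le_one B (hx1 _ _) _) _
      _ ≤ |B x₀ y| + ‖B‖ * ε := by
        rw [← dist_eq_norm, dist_comm]
        gcongr
  have hyd' : ‖y‖ ≤ ‖d‖ + ε := by
    have := norm_le_norm_add_norm_sub' y d
    rw [← dist_eq_norm] at this
    linarith
  linarith

variable {β : Type*} [MeasurableSpace β] {ν : Measure β} {B : X →L[ℝ] Y →L[ℝ] ℝ}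

theorem ae_norm_le_of_forall_abs_apply_apply_le
    (hB : ∀ y : Y, ‖y‖ = ⨆ x : {x : X // ‖x‖ ≤ 1}, |B x y|) {h : β → Y}
    (hm : AEStronglyMeasurable h ν) {u : β → ℝ}
    (hu : ∀ x : X, ‖x‖ ≤ 1 → ∀ᵐ b ∂ν, |B x (h b)| ≤ u b) : ∀ᵐ b ∂ν, ‖h b‖ ≤ u b := by
  obtain ⟨t, ht, hht⟩ := hm.isSeparable_ae_range
  obtain ⟨S, hS, hS1, hSnorm⟩ := ht.exists_countable_norming hB
  have hall : ∀ᵐ b ∂ν, ∀ x ∈ S, |B x (h b)| ≤ u b :=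
    (ae_ball_iff hS).mpr fun x hx => hu x (hS1 x hx)
  filter_upwards [hht, hall] with b hbt hb
  exact hSnorm _ hbt _ hb

theorem ae_eq_of_forall_apply_apply_ae_eq
    (hB : ∀ y : Y, ‖y‖ = ⨆ x : {x : X // ‖x‖ ≤ 1}, |B x y|) {h₁ h₂ : β → Y}
    (hm₁ : AEStronglyMeasurable h₁ ν) (hm₂ : AEStronglyMeasurable h₂ ν)
    (h : ∀ x : X, (fun b => B x (h₁ b)) =ᵐ[ν] fun b => B x (h₂ b)) : h₁ =ᵐ[ν] h₂ := by
  have hzero : ∀ᵐ b ∂ν, ‖h₁ b - h₂ b‖ ≤ 0 :=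
    ae_norm_le_of_forall_abs_apply_apply_le hB (hm₁.sub hm₂) (u := 0) fun x _ => by
      filter_upwards [h x] with b hb
      simp only [Pi.sub_apply, map_sub, hb, sub_self, abs_zero, Pi.zero_apply, le_refl]
  filter_upwards [hzero] with b hb
  exact sub_eq_zero.mp (norm_le_zero_iff.mp hb)

end NormingPair

section Domination

variable {E G F : Type*} [AddCommGroup E] [Lattice E] [IsOrderedAddMonoid E]
  [AddCommGroup G] [Lattice G] [IsOrderedAddMonoid G] [FunLike F E G]
  {T : E → G} {R : F}

theorem apply_nonneg_of_abs_le_apply_abs (hdom : ∀ e : E, |T e| ≤ R |e|) {e : E} (he : 0 ≤ e) :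
    0 ≤ R e :=
  abs_of_nonneg he ▸ (abs_nonneg (T e)).trans (hdom e)

theorem abs_apply_le_apply_abs_of_abs_le [AddMonoidHomClass F E G]
    (hdom : ∀ e : E, |T e| ≤ R |e|) {u v : E} (h : |u| ≤ |v|) : |T u| ≤ R |v| := by
  have hR := apply_nonneg_of_abs_le_apply_abs hdom (sub_nonneg.mpr h)
  rw [map_sub, sub_nonneg] at hR
  exact (hdom u).trans hR

end Domination

section Extension

variable {α β E G X Y : Type*} [MeasurableSpace α] [MeasurableSpace β]
  {μ : Measure α} {ν : Measure β}
  [NormedAddCommGroup E] [Lattice E] [HasSolidNorm E] [IsOrderedAddMonoid E] [NormedSpace ℝ E]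
  [CompleteSpace E]
  [NormedAddCommGroup G] [Lattice G] [HasSolidNorm G] [IsOrderedAddMonoid G] [NormedSpace ℝ G]
  {ιE : E →ₗ[ℝ] (α →ₘ[μ] ℝ)} {ιG : G →ₗ[ℝ] (β →ₘ[ν] ℝ)}
  [NormedAddCommGroup X] [NormedSpace ℝ X] [NormedAddCommGroup Y] [NormedSpace ℝ Y]
  {B : X →L[ℝ] Y →L[ℝ] ℝ} {T : E →ₗ[ℝ] G} {TY : (α → Y) → (β → Y)}

theorem extension_linear_combination_ae_eq (hE : IsBanachFunctionSpace μ E ιE)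
    (hB : ∀ y : Y, ‖y‖ = ⨆ x : {x : X // ‖x‖ ≤ 1}, |B x y|)
    (hmaps : ∀ (f : α → Y) (e : E), MemKB ιE f e → ∃ g : G, MemKB ιG (TY f) g)
    (hrel : ∀ (f : α → Y) (e : E) (x : X) (exy : E), MemKB ιE f e →
      ((fun a => B x (f a)) =ᵐ[μ] ⇑(ιE exy)) →
      (fun b => B x (TY f b)) =ᵐ[ν] ⇑(ιG (T exy)))
    {f g : α → Y} {e e' : E} (hf : MemKB ιE f e) (hg : MemKB ιE g e') (c₁ c₂ : ℝ) :
    TY (c₁ • f + c₂ • g) =ᵐ[ν] c₁ • TY f + c₂ • TY g := by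
  have hmeas {f : α → Y} {e : E} (hf : MemKB ιE f e) : AEStronglyMeasurable (TY f) ν :=
    (hmaps f e hf).choose_spec.1
  obtain ⟨e'', hfg⟩ := (hf.smul c₁).exists_add hE (hg.smul c₂)
  refine ae_eq_of_forall_apply_apply_ae_eq hB (hmeas hfg)
    (((hmeas hf).const_smul c₁).add ((hmeas hg).const_smul c₂)) fun x => ?_
  obtain ⟨ef, hef⟩ := hf.exists_comp_ae_eq hE (B x)
  obtain ⟨eg, heg⟩ := hg.exists_comp_ae_eq hE (B x)
  have hcomb : (fun a => B x ((c₁ • f + c₂ • g) a)) =ᵐ[μ] ιE (c₁ • ef + c₂ • eg) := by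
    filter_upwards [hef, heg, ιE.coeFn_apply_add_smul_ae c₁ c₂ ef eg] with a hfa hga h
    rw [h]
    simp only [Pi.add_apply, Pi.smul_apply, map_add, map_smul, smul_eq_mul, hfa, hga]
  filter_upwards [hrel _ _ x _ hfg hcomb, hrel _ _ x _ hf hef, hrel _ _ x _ hg heg,
    (ιG ∘ₗ T).coeFn_apply_add_smul_ae c₁ c₂ ef eg] with b h h₁ h₂ hT
  simp only [LinearMap.comp_apply] at hT
  rw [h, hT, Pi.add_apply, Pi.smul_apply, Pi.smul_apply, map_add, map_smul, map_smul, h₁, h₂,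
    smul_eq_mul, smul_eq_mul]

variable [CompleteSpace G] {R : E →L[ℝ] G}

theorem extension_ae_norm_le (hE : IsBanachFunctionSpace μ E ιE)
    (hG : IsBanachFunctionSpace ν G ιG)
    (hB : ∀ y : Y, ‖y‖ = ⨆ x : {x : X // ‖x‖ ≤ 1}, |B x y|) (hdom : ∀ e : E, |T e| ≤ R |e|)
    (hrel : ∀ (f : α → Y) (e : E) (x : X) (exy : E), MemKB ιE f e →
      ((fun a => B x (f a)) =ᵐ[μ] ⇑(ιE exy)) →
      (fun b => B x (TY f b)) =ᵐ[ν] ⇑(ιG (T exy)))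
    {f : α → Y} {e : E} (hf : MemKB ιE f e) (hm : AEStronglyMeasurable (TY f) ν) :
    ∀ᵐ b ∂ν, ‖TY f b‖ ≤ ιG (R |e|) b := by
  refine ae_norm_le_of_forall_abs_apply_apply_le hB hm fun x hx => ?_
  obtain ⟨exy, hexy⟩ := hf.exists_comp_ae_eq hE (B x)
  have habs : |exy| ≤ |e| := hE.abs_le_abs_of_ae <| by
    filter_upwards [hexy, hf.2] with a hxa hfa
    rw [← hxa, ← hfa, abs_norm]
    exact abs_apply_apply_le_norm hB hx (f a)
  have hT : |T exy| ≤ R |e| := abs_apply_le_apply_abs_of_abs_le hdom habs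
  filter_upwards [hrel f e x exy hf hexy, hG.le_iff_ae_le.mp hT, hG.map_abs (T exy)]
    with b hb hle habs
  rwa [hb, ← habs]

theorem extension_norm_le (hE : IsBanachFunctionSpace μ E ιE)
    (hG : IsBanachFunctionSpace ν G ιG)
    (hB : ∀ y : Y, ‖y‖ = ⨆ x : {x : X // ‖x‖ ≤ 1}, |B x y|) (hdom : ∀ e : E, |T e| ≤ R |e|)
    (hrel : ∀ (f : α → Y) (e : E) (x : X) (exy : E), MemKB ιE f e →
      ((fun a => B x (f a)) =ᵐ[μ] ⇑(ιE exy)) →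
      (fun b => B x (TY f b)) =ᵐ[ν] ⇑(ιG (T exy)))
    {f : α → Y} {e : E} {g : G} (hf : MemKB ιE f e) (hg : MemKB ιG (TY f) g) :
    ‖g‖ ≤ ‖R‖ * ‖e‖ := by
  have habs : |g| ≤ |(R |e|)| := hG.abs_le_abs_of_ae <| by
    filter_upwards [extension_ae_norm_le hE hG hB hdom hrel hf hg.1, hg.2] with b hb hgb
    rw [← hgb, abs_norm]
    exact hb.trans (le_abs_self _)
  calc ‖g‖ ≤ ‖R |e|‖ := norm_le_norm_of_abs_le_abs habs
    _ ≤ ‖R‖ * ‖|e|‖ := R.le_opNorm _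
    _ = ‖R‖ * ‖e‖ := by rw [norm_abs_eq_norm]

end Extension

theorem extension_automatically_bounded_general
    {α β E G : Type*} [MeasurableSpace α] [MeasurableSpace β]
    {μ : Measure α} {ν : Measure β}
    [NormedAddCommGroup E] [Lattice E] [HasSolidNorm E] [IsOrderedAddMonoid E] [NormedSpace ℝ E] [CompleteSpace E]
    [NormedAddCommGroup G] [Lattice G] [HasSolidNorm G] [IsOrderedAddMonoid G] [NormedSpace ℝ G] [CompleteSpace G]
    (ιE : E →ₗ[ℝ] (α →ₘ[μ] ℝ)) (ιG : G →ₗ[ℝ] (β →ₘ[ν] ℝ))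
    (hE : IsBanachFunctionSpace μ E ιE) (hG : IsBanachFunctionSpace ν G ιG)
    {X Y : Type*} [NormedAddCommGroup X] [NormedSpace ℝ X]
    [NormedAddCommGroup Y] [NormedSpace ℝ Y]
    (B : X →L[ℝ] Y →L[ℝ] ℝ) (hB : IsNormingDualPair B)
    (T : E →ₗ[ℝ] G) (R : E →L[ℝ] G)
    (hdom : ∀ e : E, |T e| ≤ R |e|)
    (TY : (α → Y) → (β → Y))
    -- `T_Y` maps `E(Y)` into `G(Y)`
    (hmaps : ∀ (f : α → Y) (e : E), MemKB ιE f e → ∃ g : G, MemKB ιG (TY f) g)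
    -- the defining relation `⟨x, T_Y e⟩ = T⟨x, e⟩`
    (hrel : ∀ (f : α → Y) (e : E) (x : X) (exy : E), MemKB ιE f e →
      ((fun a => B x (f a)) =ᵐ[μ] ⇑(ιE exy)) →
      (fun b => B x (TY f b)) =ᵐ[ν] ⇑(ιG (T exy))) :
    -- `T_Y` is additive and homogeneous (a.e.) on `E(Y)` …
    (∀ (f g : α → Y) (e e' : E), MemKB ιE f e → MemKB ιE g e' →
      TY (f + g) =ᵐ[ν] TY f + TY g) ∧
    (∀ (c : ℝ) (f : α → Y) (e : E), MemKB ιE f e → TY (c • f) =ᵐ[ν] c • TY f) ∧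
    -- … and bounded with norm at most `‖R‖`
    (∀ (f : α → Y) (e : E) (g : G), MemKB ιE f e → MemKB ιG (TY f) g →
      ‖g‖ ≤ ‖R‖ * ‖e‖) := by
  refine ⟨fun f g e e' hf hg => ?_, fun c f e hf => ?_, fun f e g hf hg =>
    extension_norm_le hE hG hB.2 hdom hrel hf hg⟩
  · simpa using extension_linear_combination_ae_eq hE hB.2 hmaps hrel hf hg 1 1
  · simpa using extension_linear_combination_ae_eq hE hB.2 hmaps hrel hf hf c 0

/-- **Automatic boundedness of vector-valued extensions** (Remark 3.2 in the paper).
Let `⟨X, Y⟩` be a norming Banach dual pair, `T : E → G` dominated by a positive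
bounded operator `R`, and let `T_Y : E(Y) → G(Y)` be a map satisfying
`⟨x, T_Y e⟩ = T⟨x, e⟩` for all `e ∈ E(Y)`, `x ∈ X`. Then `T_Y` is linear (a.e.) and
bounded with norm at most `‖R‖`. -/
theorem extension_automatically_bounded
    {α β E G : Type*} [MeasurableSpace α] [MeasurableSpace β]
    {μ : Measure α} {ν : Measure β}
    [NormedAddCommGroup E] [Lattice E] [HasSolidNorm E] [IsOrderedAddMonoid E] [NormedSpace ℝ E] [CompleteSpace E]
    [NormedAddCommGroup G] [Lattice G] [HasSolidNorm G] [IsOrderedAddMonoid G] [NormedSpace ℝ G] [CompleteSpace G]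
    (ιE : E →ₗ[ℝ] (α →ₘ[μ] ℝ)) (ιG : G →ₗ[ℝ] (β →ₘ[ν] ℝ))
    (hE : IsBanachFunctionSpace μ E ιE) (hG : IsBanachFunctionSpace ν G ιG)
    {X Y : Type*} [NormedAddCommGroup X] [NormedSpace ℝ X]
    [NormedAddCommGroup Y] [NormedSpace ℝ Y]
    (B : X →L[ℝ] Y →L[ℝ] ℝ) (hB : IsNormingDualPair B)
    (T : E →ₗ[ℝ] G) (R : E →L[ℝ] G)
    (hRpos : ∀ e : E, 0 ≤ e → 0 ≤ R e)
    (hdom : ∀ e : E, |T e| ≤ R |e|)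
    (TY : (α → Y) → (β → Y))
    -- `T_Y` maps `E(Y)` into `G(Y)`
    (hmaps : ∀ (f : α → Y) (e : E), MemKB ιE f e → ∃ g : G, MemKB ιG (TY f) g)
    -- the scalar functions `⟨x, e⟩` belong to `E`
    (hpair : ∀ (f : α → Y) (e : E) (x : X), MemKB ιE f e →
      ∃ exy : E, (fun a => B x (f a)) =ᵐ[μ] ⇑(ιE exy))
    -- the defining relation `⟨x, T_Y e⟩ = T⟨x, e⟩`
    (hrel : ∀ (f : α → Y) (e : E) (x : X) (exy : E), MemKB ιE f e →
      ((fun a => B x (f a)) =ᵐ[μ] ⇑(ιE exy)) →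
      (fun b => B x (TY f b)) =ᵐ[ν] ⇑(ιG (T exy))) :
    -- `T_Y` is additive and homogeneous (a.e.) on `E(Y)` …
    (∀ (f g : α → Y) (e e' : E), MemKB ιE f e → MemKB ιE g e' →
      TY (f + g) =ᵐ[ν] TY f + TY g) ∧
    (∀ (c : ℝ) (f : α → Y) (e : E), MemKB ιE f e → TY (c • f) =ᵐ[ν] c • TY f) ∧
    -- … and bounded with norm at most `‖R‖`
    (∀ (f : α → Y) (e : E) (g : G), MemKB ιE f e → MemKB ιG (TY f) g →
      ‖g‖ ≤ ‖R‖ * ‖e‖) :=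
  extension_automatically_bounded_general ιE ιG hE hG B hB T R hdom TY hmaps hrel
end

section
/- Let E, G be Banach function spaces, T : E → G bounded linear, and Y a Banach space. Suppose that for every separable closed linear subspace U of Y, T has a U-valued extension T_U ∈ L(E(U), G(U)) satisfying ⟨u*, T_U e⟩ = T⟨u*, e⟩ for all e ∈ E(U), u* ∈ U*. Then T has a Y-valued extension T_Y ∈ L(E(Y), G(Y)) satisfying ⟨y*, T_Y e⟩ = T⟨y*, e⟩ for all e ∈ E(Y), y* ∈ Y*. -/
open MeasureTheory

/-- `TY` is (a function-level realization of) a bounded linear operator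
`E(Y) → G(Y)` which is a `Y`-valued extension of `T : E → G` with respect to the
pairing `⟨Y*, Y⟩`, i.e. `⟨y*, T_Y e⟩ = T ⟨y*, e⟩` for all `e ∈ E(Y)`, `y* ∈ Y*`. -/
def IsVectorExtension {α β E G : Type*} [MeasurableSpace α] [MeasurableSpace β]
    {μ : Measure α} {ν : Measure β}
    [NormedAddCommGroup E] [Lattice E] [HasSolidNorm E] [IsOrderedAddMonoid E] [NormedSpace ℝ E]
    [NormedAddCommGroup G] [Lattice G] [HasSolidNorm G] [IsOrderedAddMonoid G] [NormedSpace ℝ G]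
    (ιE : E →ₗ[ℝ] (α →ₘ[μ] ℝ)) (ιG : G →ₗ[ℝ] (β →ₘ[ν] ℝ))
    (T : E →L[ℝ] G) {Y : Type*} [NormedAddCommGroup Y] [NormedSpace ℝ Y]
    (TY : (α → Y) → (β → Y)) : Prop :=
  -- maps `E(Y)` into `G(Y)`
  (∀ (f : α → Y) (e : E), MemKB ιE f e → ∃ g : G, MemKB ιG (TY f) g) ∧
  -- well-defined on a.e.-equivalence classes
  (∀ f g : α → Y, (∃ e : E, MemKB ιE f e) → f =ᵐ[μ] g → TY f =ᵐ[ν] TY g) ∧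
  -- additive and homogeneous
  (∀ f g : α → Y, (∃ e : E, MemKB ιE f e) → (∃ e : E, MemKB ιE g e) →
    TY (f + g) =ᵐ[ν] TY f + TY g) ∧
  (∀ (c : ℝ) (f : α → Y), (∃ e : E, MemKB ιE f e) → TY (c • f) =ᵐ[ν] c • TY f) ∧
  -- bounded
  (∃ C : ℝ, ∀ (f : α → Y) (e : E) (g : G), MemKB ιE f e → MemKB ιG (TY f) g →
    ‖g‖ ≤ C * ‖e‖) ∧
  -- the defining relation `⟨y*, T_Y e⟩ = T ⟨y*, e⟩`
  (∀ (f : α → Y) (y' : Y →L[ℝ] ℝ) (e exy : E), MemKB ιE f e →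
    ((fun a => y' (f a)) =ᵐ[μ] ⇑(ιE exy)) →
    (fun b => y' (TY f b)) =ᵐ[ν] ⇑(ιG (T exy)))

/-!
A `Y`-valued extension is pinned down by the duality relation: since strongly measurable
functions are essentially separably valued, two of them whose compositions with every
functional agree a.e. agree a.e. So for `f ∈ E(Y)` one closes the span of the (separable)
range of `f` to a separable subspace `U`, takes `T_U f` as `T_Y f`, and uniqueness makes this
choice independent of `U`; linearity is inherited through uniqueness. For boundedness, a
sequence `f n` with `‖T_Y f n‖ > n ‖f n‖` lives in one separable `U`, contradicting the bound
of `T_U`.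
-/

open TopologicalSpace

theorem ae_eq_of_forall_dual_ae_eq {β Y : Type*} [MeasurableSpace β] {ν : Measure β}
    [NormedAddCommGroup Y] [NormedSpace ℝ Y] {h₁ h₂ : β → Y}
    (hm₁ : AEStronglyMeasurable h₁ ν) (hm₂ : AEStronglyMeasurable h₂ ν)
    (h : ∀ y' : Y →L[ℝ] ℝ, (fun b => y' (h₁ b)) =ᵐ[ν] fun b => y' (h₂ b)) :
    h₁ =ᵐ[ν] h₂ := by
  obtain ⟨t, ht, hmem⟩ := (hm₁.sub hm₂).isSeparable_ae_range
  have hsub : h₁ - h₂ =ᵐ[ν] 0 := by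
    refine ae_eq_zero_of_forall_dual_of_isSeparable ℝ ht (fun y' => ?_) hmem
    filter_upwards [h y'] with b hb
    simp [hb]
  filter_upwards [hsub] with b hb using sub_eq_zero.mp hb

theorem exists_isClosed_separableSpace_submodule_ae_eq_coe {α Y ι : Type*}
    [MeasurableSpace α] {μ : Measure α} [NormedAddCommGroup Y] [NormedSpace ℝ Y] [Countable ι]
    {f : ι → α → Y} (hf : ∀ i, AEStronglyMeasurable (f i) μ) :
    ∃ U : Submodule ℝ Y, IsClosed (U : Set Y) ∧ SeparableSpace U ∧
      ∀ i, ∃ g : α → U, f i =ᵐ[μ] fun a => (g a : Y) := by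
  set U := (Submodule.span ℝ (⋃ i, Set.range ((hf i).mk (f i)))).topologicalClosure
  have hsep : IsSeparable (U : Set Y) := by
    rw [Submodule.topologicalClosure_coe]
    exact (IsSeparable.iUnion fun i => (hf i).stronglyMeasurable_mk.isSeparable_range).span.closure
  have hmem : ∀ i a, (hf i).mk (f i) a ∈ U := fun i a =>
    Submodule.le_topologicalClosure _ (Submodule.subset_span (Set.mem_iUnion.2 ⟨i, a, rfl⟩))
  exact ⟨U, Submodule.isClosed_topologicalClosure _, hsep.separableSpace, fun i =>
    ⟨fun a => ⟨_, hmem i a⟩, (hf i).ae_eq_mk⟩⟩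

section MemKB

variable {α E Y : Type*} [MeasurableSpace α] {μ : Measure α}
  [NormedAddCommGroup E] [Lattice E] [HasSolidNorm E] [IsOrderedAddMonoid E] [NormedSpace ℝ E]
  {ι : E →ₗ[ℝ] (α →ₘ[μ] ℝ)}

theorem IsBanachFunctionSpace.exists_ae_eq_of_abs_le [CompleteSpace E]
    (hι : IsBanachFunctionSpace μ E ι) {φ : α → ℝ} (hφ : AEStronglyMeasurable φ μ) (e : E)
    (hle : ∀ᵐ a ∂μ, |φ a| ≤ ι e a) : ∃ x : E, φ =ᵐ[μ] ι x := by
  have hmk := AEEqFun.coeFn_mk φ hφ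
  obtain ⟨x, hx⟩ := hι.ideal (AEEqFun.mk φ hφ) e <| by
    filter_upwards [hle, hmk] with a hle ha
    rw [ha]
    exact hle.trans (le_abs_self _)
  exact ⟨x, by rw [hx]; exact hmk.symm⟩

variable [NormedAddCommGroup Y]

theorem MemKB.congr {f g : α → Y} {e : E} (hf : MemKB ι f e) (hfg : f =ᵐ[μ] g) :
    MemKB ι g e :=
  ⟨hf.1.congr hfg, by filter_upwards [hf.2, hfg] with a ha hfga; rwa [← hfga]⟩

theorem MemKB.unique (hι : Function.Injective ι) {f : α → Y} {e₁ e₂ : E}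
    (h₁ : MemKB ι f e₁) (h₂ : MemKB ι f e₂) : e₁ = e₂ :=
  hι (AEEqFun.ext (h₁.2.symm.trans h₂.2))

theorem memKB_subtype_iff [NormedSpace ℝ Y] {U : Submodule ℝ Y} {g : α → U} {e : E} :
    MemKB ι (fun a => (g a : Y)) e ↔ MemKB ι g e := by
  rw [MemKB, MemKB, Topology.IsEmbedding.subtypeVal.aestronglyMeasurable_comp_iff]
  rfl

theorem MemKB.add [CompleteSpace E] (hι : IsBanachFunctionSpace μ E ι) {f g : α → Y}
    {e₁ e₂ : E} (hf : MemKB ι f e₁) (hg : MemKB ι g e₂) : ∃ e : E, MemKB ι (f + g) e := by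
  have hm := hf.1.add hg.1
  obtain ⟨e, he⟩ := hι.exists_ae_eq_of_abs_le hm.norm (|e₁| + |e₂|) <| by
    rw [map_add]
    filter_upwards [AEEqFun.coeFn_add (ι |e₁|) (ι |e₂|), hι.map_abs e₁, hι.map_abs e₂,
      hf.2, hg.2] with a hadd habs₁ habs₂ hfa hga
    rw [abs_norm, hadd, Pi.add_apply, Pi.add_apply, habs₁, habs₂, ← hfa, ← hga, abs_norm, abs_norm]
    exact norm_add_le _ _
  exact ⟨e, hm, he⟩

theorem MemKB.smul_s15 [NormedSpace ℝ Y] {f : α → Y} {e : E} (hf : MemKB ι f e) (c : ℝ) :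
    MemKB ι (c • f) (|c| • e) := by
  refine ⟨hf.1.const_smul c, ?_⟩
  rw [ι.map_smul]
  filter_upwards [hf.2, AEEqFun.coeFn_smul |c| (ι e)] with a hfa hsmul
  rw [hsmul, Pi.smul_apply, Pi.smul_apply, ← hfa, norm_smul, Real.norm_eq_abs, smul_eq_mul]

theorem MemKB.exists_dual_comp_ae_eq [CompleteSpace E] [NormedSpace ℝ Y]
    (hι : IsBanachFunctionSpace μ E ι) {f : α → Y} {e : E} (hf : MemKB ι f e)
    (y' : Y →L[ℝ] ℝ) : ∃ x : E, (fun a => y' (f a)) =ᵐ[μ] ι x := by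
  refine hι.exists_ae_eq_of_abs_le (y'.continuous.comp_aestronglyMeasurable hf.1)
    (‖y'‖ • |e|) ?_
  rw [ι.map_smul]
  filter_upwards [AEEqFun.coeFn_smul ‖y'‖ (ι |e|), hι.map_abs e, hf.2] with a hsmul habs hfa
  rw [hsmul, Pi.smul_apply, habs, smul_eq_mul, ← hfa, abs_norm]
  exact y'.le_opNorm (f a)

end MemKB

section WeakImage

variable {α β E G Y : Type*} [MeasurableSpace α] [MeasurableSpace β] {μ : Measure α}
  {ν : Measure β} [NormedAddCommGroup E] [NormedSpace ℝ E] [NormedAddCommGroup G]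
  [NormedSpace ℝ G] [NormedAddCommGroup Y] [NormedSpace ℝ Y]

/-- `⟨y*, Tf⟩ = T ⟨y*, f⟩` for every `y* ∈ Y*`. -/
def IsWeakImage (ιE : E →ₗ[ℝ] (α →ₘ[μ] ℝ)) (ιG : G →ₗ[ℝ] (β →ₘ[ν] ℝ)) (T : E →L[ℝ] G)
    (f : α → Y) (Tf : β → Y) : Prop :=
  ∀ (y' : Y →L[ℝ] ℝ) (x : E), (fun a => y' (f a)) =ᵐ[μ] ⇑(ιE x) →
    (fun b => y' (Tf b)) =ᵐ[ν] ⇑(ιG (T x))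

variable {ιE : E →ₗ[ℝ] (α →ₘ[μ] ℝ)} {ιG : G →ₗ[ℝ] (β →ₘ[ν] ℝ)} {T : E →L[ℝ] G}

theorem IsWeakImage.congr_left {f f' : α → Y} {Tf : β → Y} (h : IsWeakImage ιE ιG T f Tf)
    (hff' : f =ᵐ[μ] f') : IsWeakImage ιE ιG T f' Tf := fun y' x hx =>
  h y' x <| by filter_upwards [hx, hff'] with a hxa hfa; rwa [hfa]

variable [Lattice E] [HasSolidNorm E] [IsOrderedAddMonoid E] [CompleteSpace E]

theorem IsWeakImage.ae_eq (hE : IsBanachFunctionSpace μ E ιE) {f : α → Y} {e : E}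
    (hf : MemKB ιE f e) {Tf₁ Tf₂ : β → Y} (h₁ : IsWeakImage ιE ιG T f Tf₁)
    (h₂ : IsWeakImage ιE ιG T f Tf₂) (hm₁ : AEStronglyMeasurable Tf₁ ν)
    (hm₂ : AEStronglyMeasurable Tf₂ ν) : Tf₁ =ᵐ[ν] Tf₂ :=
  ae_eq_of_forall_dual_ae_eq hm₁ hm₂ fun y' => by
    obtain ⟨x, hx⟩ := hf.exists_dual_comp_ae_eq hE y'
    exact (h₁ y' x hx).trans (h₂ y' x hx).symm

theorem IsWeakImage.add (hE : IsBanachFunctionSpace μ E ιE) {f g : α → Y} {e₁ e₂ : E}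
    (hf : MemKB ιE f e₁) (hg : MemKB ιE g e₂) {Tf Tg : β → Y}
    (hTf : IsWeakImage ιE ιG T f Tf) (hTg : IsWeakImage ιE ιG T g Tg) :
    IsWeakImage ιE ιG T (f + g) (Tf + Tg) := by
  intro y' x hx
  obtain ⟨x₁, hx₁⟩ := hf.exists_dual_comp_ae_eq hE y'
  obtain ⟨x₂, hx₂⟩ := hg.exists_dual_comp_ae_eq hE y'
  obtain rfl : x = x₁ + x₂ := hE.inj <| AEEqFun.ext <| by
    rw [map_add]
    filter_upwards [hx, hx₁, hx₂, AEEqFun.coeFn_add (ιE x₁) (ιE x₂)] with a hxa hxa₁ hxa₂ hadd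
    rw [← hxa, hadd, Pi.add_apply, Pi.add_apply, ← hxa₁, ← hxa₂, map_add]
  rw [map_add, map_add]
  filter_upwards [hTf y' x₁ hx₁, hTg y' x₂ hx₂, AEEqFun.coeFn_add (ιG (T x₁)) (ιG (T x₂))]
    with b hb₁ hb₂ hadd
  rw [hadd, Pi.add_apply, Pi.add_apply, map_add, hb₁, hb₂]

theorem IsWeakImage.smul_s15 (hE : IsBanachFunctionSpace μ E ιE) {f : α → Y} {e : E}
    (hf : MemKB ιE f e) {Tf : β → Y} (hTf : IsWeakImage ιE ιG T f Tf) (c : ℝ) :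
    IsWeakImage ιE ιG T (c • f) (c • Tf) := by
  intro y' x hx
  obtain ⟨x₁, hx₁⟩ := hf.exists_dual_comp_ae_eq hE y'
  obtain rfl : x = c • x₁ := hE.inj <| AEEqFun.ext <| by
    rw [ιE.map_smul]
    filter_upwards [hx, hx₁, AEEqFun.coeFn_smul c (ιE x₁)] with a hxa hxa₁ hsmul
    rw [← hxa, hsmul, Pi.smul_apply, Pi.smul_apply, ← hxa₁, map_smul]
  rw [map_smul, ιG.map_smul]
  filter_upwards [hTf y' x₁ hx₁, AEEqFun.coeFn_smul c (ιG (T x₁))] with b hb hsmul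
  rw [hsmul, Pi.smul_apply, Pi.smul_apply, map_smul, hb]

end WeakImage

section SeparableReduction

variable {α β E G Y : Type*} [MeasurableSpace α] [MeasurableSpace β] {μ : Measure α}
  {ν : Measure β}
  [NormedAddCommGroup E] [Lattice E] [HasSolidNorm E] [IsOrderedAddMonoid E] [NormedSpace ℝ E]
  [NormedAddCommGroup G] [Lattice G] [HasSolidNorm G] [IsOrderedAddMonoid G] [NormedSpace ℝ G]
  {ιE : E →ₗ[ℝ] (α →ₘ[μ] ℝ)} {ιG : G →ₗ[ℝ] (β →ₘ[ν] ℝ)} {T : E →L[ℝ] G}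
  [NormedAddCommGroup Y] [NormedSpace ℝ Y]

theorem IsVectorExtension.isWeakImage_coe {U : Submodule ℝ Y} {TU : (α → U) → (β → U)}
    (hTU : IsVectorExtension ιE ιG T TU) {g : α → U} {e : E} (hg : MemKB ιE g e) :
    IsWeakImage ιE ιG T (fun a => (g a : Y)) (fun b => (TU g b : Y)) :=
  fun y' x hx => hTU.2.2.2.2.2 g (y'.comp U.subtypeL) e x hg hx

theorem exists_memKB_isWeakImage_of_separable
    (hU : ∀ U : Submodule ℝ Y, IsClosed (U : Set Y) → SeparableSpace U →
      ∃ TU : (α → U) → (β → U), IsVectorExtension ιE ιG T TU)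
    {f : α → Y} (hf : ∃ e : E, MemKB ιE f e) :
    ∃ Tf : β → Y, (∃ g : G, MemKB ιG Tf g) ∧ IsWeakImage ιE ιG T f Tf := by
  obtain ⟨e, hf⟩ := hf
  obtain ⟨U, hUc, hUs, hfU⟩ :=
    exists_isClosed_separableSpace_submodule_ae_eq_coe fun _ : Unit => hf.1
  obtain ⟨g, hfg⟩ := hfU ()
  obtain ⟨TU, hTU⟩ := hU U hUc hUs
  have hgE : MemKB ιE g e := memKB_subtype_iff.1 (hf.congr hfg)
  obtain ⟨g', hg'⟩ := hTU.1 g e hgE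
  exact ⟨_, ⟨g', memKB_subtype_iff.2 hg'⟩, (hTU.isWeakImage_coe hgE).congr_left hfg.symm⟩

theorem exists_bound_of_separable [CompleteSpace E] (hE : IsBanachFunctionSpace μ E ιE)
    (hG : Function.Injective ιG)
    (hU : ∀ U : Submodule ℝ Y, IsClosed (U : Set Y) → SeparableSpace U →
      ∃ TU : (α → U) → (β → U), IsVectorExtension ιE ιG T TU)
    {TY : (α → Y) → β → Y} (hTY : ∀ f e, MemKB ιE f e → IsWeakImage ιE ιG T f (TY f)) :
    ∃ C : ℝ, ∀ (f : α → Y) (e : E) (g : G), MemKB ιE f e → MemKB ιG (TY f) g →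
      ‖g‖ ≤ C * ‖e‖ := by
  by_contra! hC
  choose f e g hf hg hlt using fun n : ℕ => hC n
  obtain ⟨U, hUc, hUs, hfU⟩ :=
    exists_isClosed_separableSpace_submodule_ae_eq_coe fun n => (hf n).1
  choose fU hfU using hfU
  obtain ⟨TU, hTU⟩ := hU U hUc hUs
  obtain ⟨CU, hCU⟩ := hTU.2.2.2.2.1
  set n := ⌈CU⌉₊
  have hfUE : MemKB ιE (fU n) (e n) := memKB_subtype_iff.1 ((hf n).congr (hfU n))
  obtain ⟨g', hg'⟩ := hTU.1 _ _ hfUE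
  have hTU_eq : TY (f n) =ᵐ[ν] fun b => (TU (fU n) b : Y) :=
    (hTY _ _ (hf n)).ae_eq hE (hf n) ((hTU.isWeakImage_coe hfUE).congr_left (hfU n).symm)
      (hg n).1 (memKB_subtype_iff.2 hg').1
  obtain rfl : g n = g' := (hg n).unique hG ((memKB_subtype_iff.2 hg').congr hTU_eq.symm)
  have hn : CU * ‖e n‖ ≤ n * ‖e n‖ := by gcongr; exact Nat.le_ceil CU
  linarith [hCU _ _ _ hfUE hg', hlt n]

end SeparableReduction

theorem extension_of_separable_subspace_extensions_general
    {α β E G : Type*} [MeasurableSpace α] [MeasurableSpace β]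
    {μ : Measure α} {ν : Measure β}
    [NormedAddCommGroup E] [Lattice E] [HasSolidNorm E] [IsOrderedAddMonoid E] [NormedSpace ℝ E] [CompleteSpace E]
    [NormedAddCommGroup G] [Lattice G] [HasSolidNorm G] [IsOrderedAddMonoid G] [NormedSpace ℝ G] [CompleteSpace G]
    (ιE : E →ₗ[ℝ] (α →ₘ[μ] ℝ)) (ιG : G →ₗ[ℝ] (β →ₘ[ν] ℝ))
    (hE : IsBanachFunctionSpace μ E ιE) (hG : IsBanachFunctionSpace ν G ιG)
    (T : E →L[ℝ] G)
    {Y : Type*} [NormedAddCommGroup Y] [NormedSpace ℝ Y]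
    (hU : ∀ U : Submodule ℝ Y, IsClosed (U : Set Y) →
      TopologicalSpace.SeparableSpace U →
      ∃ TU : (α → U) → (β → U), IsVectorExtension ιE ιG T TU) :
    ∃ TY : (α → Y) → (β → Y), IsVectorExtension ιE ιG T TY := by
  choose! TY hTY using fun f (hf : ∃ e, MemKB ιE f e) => exists_memKB_isWeakImage_of_separable hU hf
  have hmeas : ∀ f e, MemKB ιE f e → AEStronglyMeasurable (TY f) ν := fun f e hf =>
    (hTY f ⟨e, hf⟩).1.choose_spec.1
  have hweak : ∀ f e, MemKB ιE f e → IsWeakImage ιE ιG T f (TY f) := fun f e hf =>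
    (hTY f ⟨e, hf⟩).2
  refine ⟨TY, fun f e hf => (hTY f ⟨e, hf⟩).1, ?_, ?_, ?_,
    exists_bound_of_separable hE hG.inj hU hweak, fun f y' e x hf => hweak f e hf y' x⟩
  · rintro f g ⟨e, hf⟩ hfg
    have hg := hf.congr hfg
    exact (hweak f e hf).ae_eq hE hf ((hweak g e hg).congr_left hfg.symm) (hmeas f e hf)
      (hmeas g e hg)
  · rintro f g ⟨e₁, hf⟩ ⟨e₂, hg⟩
    obtain ⟨e, hfg⟩ := hf.add hE hg
    exact (hweak _ e hfg).ae_eq hE hfg ((hweak f e₁ hf).add hE hf hg (hweak g e₂ hg))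
      (hmeas _ e hfg) ((hmeas f e₁ hf).add (hmeas g e₂ hg))
  · rintro c f ⟨e, hf⟩
    exact (hweak _ _ (hf.smul_s15 c)).ae_eq hE (hf.smul_s15 c) ((hweak f e hf).smul_s15 hE hf c)
      (hmeas _ _ (hf.smul_s15 c)) ((hmeas f e hf).const_smul c)

/-- **Reduction to separable subspaces.** If `T : E → G` has a `U`-valued extension
(with respect to `⟨U*, U⟩`) for every separable closed linear subspace `U` of `Y`,
then `T` has a `Y`-valued extension with respect to `⟨Y*, Y⟩`. -/
theorem extension_of_separable_subspace_extensions
    {α β E G : Type*} [MeasurableSpace α] [MeasurableSpace β]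
    {μ : Measure α} {ν : Measure β}
    [NormedAddCommGroup E] [Lattice E] [HasSolidNorm E] [IsOrderedAddMonoid E] [NormedSpace ℝ E] [CompleteSpace E]
    [NormedAddCommGroup G] [Lattice G] [HasSolidNorm G] [IsOrderedAddMonoid G] [NormedSpace ℝ G] [CompleteSpace G]
    (ιE : E →ₗ[ℝ] (α →ₘ[μ] ℝ)) (ιG : G →ₗ[ℝ] (β →ₘ[ν] ℝ))
    (hE : IsBanachFunctionSpace μ E ιE) (hG : IsBanachFunctionSpace ν G ιG)
    (T : E →L[ℝ] G)
    {Y : Type*} [NormedAddCommGroup Y] [NormedSpace ℝ Y] [CompleteSpace Y]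
    (hU : ∀ U : Submodule ℝ Y, IsClosed (U : Set Y) →
      TopologicalSpace.SeparableSpace U →
      ∃ TU : (α → U) → (β → U), IsVectorExtension ιE ιG T TU) :
    ∃ TY : (α → Y) → (β → Y), IsVectorExtension ιE ιG T TY :=
  extension_of_separable_subspace_extensions_general ιE ιG hE hG T hU
end
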